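/- arXiv:0802.3307 — 4 statements merged into one kernel-verified Lean document; each statement's English description precedes it below -/
import Mathlib

section
/- With the notation ⟨ε_t, δ_{k/n}⟩ = E(B_t(B_{(k+1)/n} - B_{k/n})) for fractional Brownian motion B with H = 1/4, there exists a constant C such that for all n ≥ 1, sup_{t∈[0,1]} Σ_{k=0}^{n-1} |⟨ε_t, δ_{k/n}⟩| ≤ C, i.e. this supremum is O(1) as n → ∞. -/
/-!
For fixed `t`, the covariance `s ↦ R t s = ½ (√t + √s - √|t - s|)` is the difference of the
nondecreasing functions `½ (√t + √s - √(t - s)⁺)` and `½ √(s - t)⁺`. Hence its increments over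
any monotone grid are dominated by the telescoping increments of their sum, and the total
variation of `R t` on `[0, 1]` is at most `½ (1 + √t + √(1 - t)) ≤ 3/2`, uniformly in `n` and `t`.
-/

open MeasureTheory Finset

lemma sum_abs_sub_le_of_monotone {P Q : ℝ → ℝ} (hP : Monotone P) (hQ : Monotone Q)
    {x : ℕ → ℝ} (hx : Monotone x) (n : ℕ) :
    ∑ k ∈ range n, |(P (x (k + 1)) - Q (x (k + 1))) - (P (x k) - Q (x k))|
      ≤ (P (x n) + Q (x n)) - (P (x 0) + Q (x 0)) := by
  have step : ∀ k ∈ range n, |(P (x (k + 1)) - Q (x (k + 1))) - (P (x k) - Q (x k))|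
      ≤ (P (x (k + 1)) + Q (x (k + 1))) - (P (x k) + Q (x k)) := fun k _ => by
    have hk := hx k.le_succ
    have := hP hk
    have := hQ hk
    rw [abs_le]
    constructor <;> linarith
  calc _ ≤ ∑ k ∈ range n, ((P (x (k + 1)) + Q (x (k + 1))) - (P (x k) + Q (x k))) :=
        sum_le_sum step
    _ = _ := sum_range_sub (fun k => P (x k) + Q (x k)) n

lemma sqrt_abs_eq_sqrt_max_add_sqrt_max (x : ℝ) :
    Real.sqrt |x| = Real.sqrt (max x 0) + Real.sqrt (max (-x) 0) := by
  rcases le_total x 0 with h | h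
  · rw [abs_of_nonpos h, max_eq_right h, max_eq_left (neg_nonneg.mpr h), Real.sqrt_zero,
      zero_add]
  · rw [abs_of_nonneg h, max_eq_left h, max_eq_right (neg_nonpos.mpr h), Real.sqrt_zero,
      add_zero]

lemma monotone_sqrt_max_sub (t : ℝ) : Monotone fun s : ℝ => Real.sqrt (max (s - t) 0) :=
  fun _ _ h => Real.sqrt_le_sqrt (max_le_max (by linarith) le_rfl)

lemma antitone_sqrt_max_sub (t : ℝ) : Antitone fun s : ℝ => Real.sqrt (max (t - s) 0) :=
  fun _ _ h => Real.sqrt_le_sqrt (max_le_max (by linarith) le_rfl)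

/-- Covariance of fractional Brownian motion with Hurst index `1/4`. -/
noncomputable def fbmQuarterCov (t s : ℝ) : ℝ :=
  (1/2) * (Real.sqrt s + Real.sqrt t - Real.sqrt |s - t|)

lemma fbmQuarterCov_eq_sub (t s : ℝ) :
    fbmQuarterCov t s
      = (1/2) * (Real.sqrt t + Real.sqrt s - Real.sqrt (max (t - s) 0))
        - (1/2) * Real.sqrt (max (s - t) 0) := by
  rw [fbmQuarterCov, sqrt_abs_eq_sqrt_max_add_sqrt_max, neg_sub]
  ring

lemma sum_abs_fbmQuarterCov_sub_le {t : ℝ} (ht : t ∈ Set.Icc (0:ℝ) 1) (n : ℕ) :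
    ∑ k ∈ range n, |fbmQuarterCov t (((k:ℝ)+1)/n) - fbmQuarterCov t ((k:ℝ)/n)| ≤ 3/2 := by
  obtain ⟨ht0, ht1⟩ := ht
  set P : ℝ → ℝ := fun s => (1/2) * (Real.sqrt t + Real.sqrt s - Real.sqrt (max (t - s) 0))
  set Q : ℝ → ℝ := fun s => (1/2) * Real.sqrt (max (s - t) 0)
  have hP : Monotone P := fun a b h => by
    have := Real.sqrt_le_sqrt h
    have := antitone_sqrt_max_sub t h
    simp only [P]
    linarith
  have hQ : Monotone Q := fun a b h => by
    have := monotone_sqrt_max_sub t h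
    simp only [Q]
    linarith
  have hx : Monotone fun k : ℕ => (k:ℝ)/n :=
    fun a b h => div_le_div_of_nonneg_right (by exact_mod_cast h) n.cast_nonneg
  have hvar := sum_abs_sub_le_of_monotone hP hQ hx n
  simp only [P, Q, ← fbmQuarterCov_eq_sub, Nat.cast_succ] at hvar
  refine hvar.trans ?_
  rcases n.eq_zero_or_pos with rfl | hn
  · norm_num
  have hn' : (n:ℝ) ≠ 0 := by positivity
  simp only [div_self hn', CharP.cast_eq_zero, zero_div, Real.sqrt_zero, zero_sub, sub_zero,
    max_eq_right (sub_nonpos.mpr ht1), max_eq_right (neg_nonpos.mpr ht0),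
    max_eq_left (sub_nonneg.mpr ht1), max_eq_left ht0, Real.sqrt_one]
  have := Real.sqrt_le_one.mpr ht1
  have := Real.sqrt_le_one.mpr (by linarith : 1 - t ≤ 1)
  linarith

theorem stmt_3_general {Ω : Type*} [MeasurableSpace Ω] (μ : Measure Ω)
    (B : ℝ → Ω → ℝ)
    (hcov : ∀ s t : ℝ, s ∈ Set.Icc (0:ℝ) 1 → t ∈ Set.Icc (0:ℝ) 1 →
      ∫ ω, B s ω * B t ω ∂μ
        = (1/2) * (Real.sqrt t + Real.sqrt s - Real.sqrt |t - s|))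
    (hint : ∀ s t : ℝ, Integrable (fun ω => B s ω * B t ω) μ) :
    ∃ C : ℝ, ∀ n : ℕ, 1 ≤ n → ∀ t : ℝ, t ∈ Set.Icc (0:ℝ) 1 →
      ∑ k ∈ Finset.range n,
        |∫ ω, B t ω * (B (((k:ℝ)+1)/n) ω - B ((k:ℝ)/n) ω) ∂μ| ≤ C := by
  refine ⟨3/2, fun n _ t ht => le_of_eq_of_le (sum_congr rfl fun k hk => ?_)
    (sum_abs_fbmQuarterCov_sub_le ht n)⟩
  have hkn : (k:ℝ) + 1 ≤ n := by exact_mod_cast mem_range.mp hk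
  have hn : (0:ℝ) < n := by linarith [k.cast_nonneg (α := ℝ)]
  have hgrid : ∀ j : ℝ, 0 ≤ j → j ≤ n → j / n ∈ Set.Icc (0:ℝ) 1 :=
    fun j hj hjn => ⟨by positivity, (div_le_one hn).mpr hjn⟩
  have hsplit : ∀ a b : ℝ, ∫ ω, B t ω * (B a ω - B b ω) ∂μ
      = ∫ ω, B t ω * B a ω ∂μ - ∫ ω, B t ω * B b ω ∂μ := fun a b => by
    simp_rw [mul_sub]
    exact integral_sub (hint t a) (hint t b)
  rw [hsplit, hcov t _ ht (hgrid _ (by positivity) hkn),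
    hcov t _ ht (hgrid _ k.cast_nonneg (by linarith)), fbmQuarterCov, fbmQuarterCov]

/-- `sup_{t∈[0,1]} Σ_{k=0}^{n-1} |⟨ε_t, δ_{k/n}⟩| = O(1)` for fBm with `H = 1/4`. -/
theorem stmt_3 {Ω : Type*} [MeasurableSpace Ω] (μ : Measure Ω) [IsProbabilityMeasure μ]
    (B : ℝ → Ω → ℝ)
    (hcov : ∀ s t : ℝ, s ∈ Set.Icc (0:ℝ) 1 → t ∈ Set.Icc (0:ℝ) 1 →
      ∫ ω, B s ω * B t ω ∂μ
        = (1/2) * (Real.sqrt t + Real.sqrt s - Real.sqrt |t - s|))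
    (hint : ∀ s t : ℝ, Integrable (fun ω => B s ω * B t ω) μ) :
    ∃ C : ℝ, ∀ n : ℕ, 1 ≤ n → ∀ t : ℝ, t ∈ Set.Icc (0:ℝ) 1 →
      ∑ k ∈ Finset.range n,
        |∫ ω, B t ω * (B (((k:ℝ)+1)/n) ω - B ((k:ℝ)/n) ω) ∂μ| ≤ C :=
  stmt_3_general μ B hcov hint
end

section
/- For fractional Brownian motion B with H = 1/4 and the pairings ⟨ε_{j/n}, δ_{k/n}⟩ = E(B_{j/n}(B_{(k+1)/n} - B_{k/n})), the double sum Σ_{k,j=0}^{n-1} |⟨ε_{j/n}, δ_{k/n}⟩| is O(n) as n → ∞, i.e. there is a constant C with Σ_{k,j=0}^{n-1} |⟨ε_{j/n}, δ_{k/n}⟩| ≤ C n for all n ≥ 1. -/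
/-!
By bilinearity and the covariance formula, the pairing of `s = j/n` with the increment over
`[k/n, (k+1)/n]` is `½ (√((k+1)/n) - √(k/n))` minus half the increment of `t ↦ √|t - s|` over
the same interval. The first part telescopes to `1` in `k`. For fixed `s`, the second is
controlled by the total variation of `t ↦ √|t - s|` on the grid, which decreases up to `s` and
increases after it, so its variation on `[0, 1]` is at most `2`. Summing over the other index
gives the bound `3n/2`.
-/

open MeasureTheory Finset

lemma sum_range_abs_sub_of_antitoneOn_of_monotoneOn {f : ℕ → ℝ} {p m : ℕ} (hpm : p ≤ m)
    (hanti : AntitoneOn f (Set.Iic p)) (hmono : MonotoneOn f (Set.Ici p)) :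
    ∑ i ∈ range m, |f (i + 1) - f i| = f 0 - 2 * f p + f m := by
  have hdown : ∑ i ∈ range p, |f (i + 1) - f i| = f 0 - f p := by
    rw [← sum_range_sub']
    refine sum_congr rfl fun i hi => ?_
    have hi : i + 1 ≤ p := mem_range.mp hi
    rw [abs_sub_comm, abs_of_nonneg (sub_nonneg.mpr <|
      hanti (Set.mem_Iic.mpr (by omega)) (Set.mem_Iic.mpr hi) (by omega))]
  have hup : ∑ i ∈ Ico p m, |f (i + 1) - f i| = f m - f p := by
    rw [← sum_Ico_sub f hpm]
    refine sum_congr rfl fun i hi => ?_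
    have hi : p ≤ i := (mem_Ico.mp hi).1
    rw [abs_of_nonneg (sub_nonneg.mpr <|
      hmono (Set.mem_Ici.mpr hi) (Set.mem_Ici.mpr (by omega)) (by omega))]
  rw [← sum_range_add_sum_Ico _ hpm, hdown, hup]
  ring

lemma Real.sqrt_abs_sub_antitoneOn (c : ℝ) : AntitoneOn (fun x => √|x - c|) (Set.Iic c) :=
  fun a ha b hb hab => Real.sqrt_le_sqrt <| by
    rw [abs_of_nonpos (sub_nonpos.mpr hb), abs_of_nonpos (sub_nonpos.mpr ha)]
    linarith

lemma Real.sqrt_abs_sub_monotoneOn (c : ℝ) : MonotoneOn (fun x => √|x - c|) (Set.Ici c) :=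
  fun a ha b hb hab => Real.sqrt_le_sqrt <| by
    rw [abs_of_nonneg (sub_nonneg.mpr ha), abs_of_nonneg (sub_nonneg.mpr hb)]
    linarith

lemma sum_range_sqrt_div_sub {n : ℕ} (hn : n ≠ 0) :
    ∑ k ∈ range n, (√(((k : ℝ) + 1) / n) - √((k : ℝ) / n)) = 1 := by
  have := sum_range_sub (fun k : ℕ => √((k : ℝ) / n)) n
  push_cast at this
  rw [this, div_self (Nat.cast_ne_zero.mpr hn)]
  simp

lemma sum_range_abs_sqrt_abs_sub_le {n j : ℕ} (hj : j ≤ n) :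
    ∑ k ∈ range n, |√(|((k : ℝ) + 1) / n - j / n|) - √(|(k : ℝ) / n - j / n|)| ≤ 2 := by
  set f : ℕ → ℝ := fun k => √|(k : ℝ) / n - j / n|
  have hdiv : Monotone fun k : ℕ => (k : ℝ) / n := fun a b hab =>
    div_le_div_of_nonneg_right (Nat.cast_le.mpr hab) n.cast_nonneg
  have hanti : AntitoneOn f (Set.Iic j) := fun a ha b hb hab =>
    Real.sqrt_abs_sub_antitoneOn _ (hdiv ha) (hdiv hb) (hdiv hab)
  have hmono : MonotoneOn f (Set.Ici j) := fun a ha b hb hab =>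
    Real.sqrt_abs_sub_monotoneOn _ (hdiv ha) (hdiv hb) (hdiv hab)
  have hf_le : ∀ i ≤ n, f i ≤ 1 := fun i hi => Real.sqrt_le_one.mpr <| by
    obtain ⟨hi₀, hi₁⟩ := unitInterval.div_mem i.cast_nonneg n.cast_nonneg (Nat.cast_le.mpr hi)
    obtain ⟨hj₀, hj₁⟩ := unitInterval.div_mem j.cast_nonneg n.cast_nonneg (Nat.cast_le.mpr hj)
    exact abs_sub_le_of_nonneg_of_le hi₀ hi₁ hj₀ hj₁
  calc _ = ∑ k ∈ range n, |f (k + 1) - f k| := by simp [f]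
    _ = f 0 - 2 * f j + f n := sum_range_abs_sub_of_antitoneOn_of_monotoneOn hj hanti hmono
    _ ≤ 2 := by linarith [hf_le 0 n.zero_le, hf_le n le_rfl, (Real.sqrt_nonneg _ : 0 ≤ f j)]

section Covariance

variable {Ω : Type*} [MeasurableSpace Ω] {μ : Measure Ω} {B : ℝ → Ω → ℝ}

lemma integral_mul_increment_eq
    (hcov : ∀ s t : ℝ, s ∈ Set.Icc (0:ℝ) 1 → t ∈ Set.Icc (0:ℝ) 1 →
      ∫ ω, B s ω * B t ω ∂μ
        = (1/2) * (Real.sqrt t + Real.sqrt s - Real.sqrt |t - s|))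
    (hint : ∀ s t : ℝ, Integrable (fun ω => B s ω * B t ω) μ) {s t₀ t₁ : ℝ}
    (hs : s ∈ Set.Icc (0:ℝ) 1) (ht₀ : t₀ ∈ Set.Icc (0:ℝ) 1) (ht₁ : t₁ ∈ Set.Icc (0:ℝ) 1) :
    ∫ ω, B s ω * (B t₁ ω - B t₀ ω) ∂μ
      = (1/2) * ((√t₁ - √t₀) - (√|t₁ - s| - √|t₀ - s|)) := by
  simp_rw [mul_sub]
  rw [integral_sub (hint _ _) (hint _ _), hcov _ _ hs ht₁, hcov _ _ hs ht₀]
  ring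

lemma abs_integral_mul_increment_le
    (hcov : ∀ s t : ℝ, s ∈ Set.Icc (0:ℝ) 1 → t ∈ Set.Icc (0:ℝ) 1 →
      ∫ ω, B s ω * B t ω ∂μ
        = (1/2) * (Real.sqrt t + Real.sqrt s - Real.sqrt |t - s|))
    (hint : ∀ s t : ℝ, Integrable (fun ω => B s ω * B t ω) μ) {s t₀ t₁ : ℝ}
    (hs : s ∈ Set.Icc (0:ℝ) 1) (ht₀ : t₀ ∈ Set.Icc (0:ℝ) 1) (ht₁ : t₁ ∈ Set.Icc (0:ℝ) 1)
    (h : t₀ ≤ t₁) :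
    |∫ ω, B s ω * (B t₁ ω - B t₀ ω) ∂μ|
      ≤ (1/2) * (√t₁ - √t₀) + (1/2) * |√(|t₁ - s|) - √(|t₀ - s|)| := by
  have hmono : 0 ≤ √t₁ - √t₀ := sub_nonneg.mpr (Real.sqrt_le_sqrt h)
  rw [integral_mul_increment_eq hcov hint hs ht₀ ht₁, abs_mul, abs_of_pos one_half_pos,
    ← mul_add]
  gcongr
  exact (abs_sub _ _).trans_eq (by rw [abs_of_nonneg hmono])

end Covariance

theorem stmt_4_general {Ω : Type*} [MeasurableSpace Ω] (μ : Measure Ω)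
    (B : ℝ → Ω → ℝ)
    (hcov : ∀ s t : ℝ, s ∈ Set.Icc (0:ℝ) 1 → t ∈ Set.Icc (0:ℝ) 1 →
      ∫ ω, B s ω * B t ω ∂μ
        = (1/2) * (Real.sqrt t + Real.sqrt s - Real.sqrt |t - s|))
    (hint : ∀ s t : ℝ, Integrable (fun ω => B s ω * B t ω) μ) :
    ∃ C : ℝ, ∀ n : ℕ, 1 ≤ n →
      ∑ k ∈ Finset.range n, ∑ j ∈ Finset.range n,
        |∫ ω, B ((j:ℝ)/n) ω * (B (((k:ℝ)+1)/n) ω - B ((k:ℝ)/n) ω) ∂μ| ≤ C * n := by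
  refine ⟨3 / 2, fun n hn => ?_⟩
  have hgrid : ∀ x : ℝ, 0 ≤ x → x ≤ n → x / n ∈ Set.Icc (0:ℝ) 1 :=
    fun x hx hxn => unitInterval.div_mem hx n.cast_nonneg hxn
  calc ∑ k ∈ range n, ∑ j ∈ range n,
        |∫ ω, B ((j:ℝ)/n) ω * (B (((k:ℝ)+1)/n) ω - B ((k:ℝ)/n) ω) ∂μ|
      ≤ ∑ k ∈ range n, ∑ j ∈ range n, ((1/2) * (√(((k:ℝ)+1)/n) - √((k:ℝ)/n))
          + (1/2) * |√(|((k:ℝ)+1)/n - j/n|) - √(|(k:ℝ)/n - j/n|)|) := by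
        gcongr with k hk j hj
        have hk : (k:ℝ) + 1 ≤ n := by exact_mod_cast mem_range.mp hk
        have hj : (j:ℝ) ≤ n := by exact_mod_cast (mem_range.mp hj).le
        exact abs_integral_mul_increment_le hcov hint (hgrid _ j.cast_nonneg hj)
          (hgrid _ k.cast_nonneg (by linarith)) (hgrid _ (by positivity) hk)
          (by gcongr; linarith)
    _ = (1/2) * n * ∑ k ∈ range n, (√(((k:ℝ)+1)/n) - √((k:ℝ)/n))
          + (1/2) * ∑ j ∈ range n, ∑ k ∈ range n,
              |√(|((k:ℝ)+1)/n - j/n|) - √(|(k:ℝ)/n - j/n|)| := by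
        simp only [sum_add_distrib, sum_const, card_range, nsmul_eq_mul, ← mul_sum]
        rw [sum_comm]
        ring
    _ ≤ (1/2) * n * 1 + (1/2) * ∑ j ∈ range n, (2:ℝ) := by
        rw [sum_range_sqrt_div_sub (by omega)]
        gcongr with j hj
        exact sum_range_abs_sqrt_abs_sub_le (mem_range.mp hj).le
    _ = 3 / 2 * n := by
        rw [sum_const, card_range, nsmul_eq_mul]
        ring

/-- `Σ_{k,j=0}^{n-1} |⟨ε_{j/n}, δ_{k/n}⟩| = O(n)` for fBm with `H = 1/4`. -/
theorem stmt_4 {Ω : Type*} [MeasurableSpace Ω] (μ : Measure Ω) [IsProbabilityMeasure μ]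
    (B : ℝ → Ω → ℝ)
    (hcov : ∀ s t : ℝ, s ∈ Set.Icc (0:ℝ) 1 → t ∈ Set.Icc (0:ℝ) 1 →
      ∫ ω, B s ω * B t ω ∂μ
        = (1/2) * (Real.sqrt t + Real.sqrt s - Real.sqrt |t - s|))
    (hint : ∀ s t : ℝ, Integrable (fun ω => B s ω * B t ω) μ) :
    ∃ C : ℝ, ∀ n : ℕ, 1 ≤ n →
      ∑ k ∈ Finset.range n, ∑ j ∈ Finset.range n,
        |∫ ω, B ((j:ℝ)/n) ω * (B (((k:ℝ)+1)/n) ω - B ((k:ℝ)/n) ω) ∂μ| ≤ C * n :=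
  stmt_4_general μ B hcov hint
end

section
/- The Gaussian process F defined by F_t = u(t,0), where u solves the stochastic heat equation u_t = (1/2)u_{xx} + Ẇ on [0,1]×ℝ with u(0,·)=0 and Ẇ space-time white noise, is centered Gaussian with covariance E(F_s F_t) = (1/√(2π))(√(t+s) - √|t-s|); in particular F is a bifractional Brownian motion with indices H = K = 1/2 up to the multiplicative constant 2^{-1/2} (2π)^{-1/2} normalization. -/
/-!
The space integral of a product of two heat kernels is the Chapman–Kolmogorov identity at the
origin, `∫ p_a p_b = p_{a+b}(0) = (2π(a+b))^{-1/2}`, so the covariance reduces to the elementary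
integral `∫_0^{s∧t} (2π(t+s-2r))^{-1/2} dr = (2π)^{-1/2}(√(t+s) - √|t-s|)`. For `H = K = 1/2`
the bifractional covariance is `2^{-1/2}(√(s+t) - √|t-s|)`, which gives the constant `π^{-1/2}`.
-/

open MeasureTheory Real

noncomputable def heatKernel (t x : ℝ) : ℝ := (√(2 * π * t))⁻¹ * exp (-x ^ 2 / (2 * t))

noncomputable def bifractionalCovariance (H K s t : ℝ) : ℝ :=
  2 ^ (-K) * ((s ^ (2 * H) + t ^ (2 * H)) ^ K - |t - s| ^ (2 * H * K))

theorem integral_heatKernel_mul_heatKernel {a b : ℝ} (ha : 0 < a) (hb : 0 < b) :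
    ∫ y, heatKernel a y * heatKernel b y = (√(2 * π * (a + b)))⁻¹ := by
  have hprod : ∀ y, heatKernel a y * heatKernel b y =
      ((√(2 * π * a))⁻¹ * (√(2 * π * b))⁻¹) * exp (-((a + b) / (2 * a * b)) * y ^ 2) := by
    intro y
    rw [heatKernel, heatKernel, mul_mul_mul_comm, ← exp_add]
    congr 2
    field_simp
    ring
  simp_rw [hprod]
  rw [integral_const_mul, integral_gaussian, ← sqrt_inv, ← sqrt_inv, ← sqrt_mul (by positivity),
    ← sqrt_mul (by positivity), ← sqrt_inv]
  congr 1
  field_simp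

theorem integral_inv_sqrt_sub_two_mul {a m : ℝ} (hm : 0 ≤ m) (hma : 2 * m ≤ a) :
    ∫ r in (0 : ℝ)..m, (√(a - 2 * r))⁻¹ = √a - √(a - 2 * m) := by
  have hrpow : ∀ x ∈ Set.uIcc (a - 2 * m) a, (√x)⁻¹ = x ^ (-(1 / 2) : ℝ) := fun x hx => by
    have hx0 : 0 ≤ x := by
      rw [Set.uIcc_of_le (by linarith)] at hx
      linarith [hx.1]
    rw [sqrt_eq_rpow, rpow_neg hx0]
  rw [intervalIntegral.integral_comp_sub_mul (fun x => (√x)⁻¹) two_ne_zero, mul_zero, sub_zero,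
    intervalIntegral.integral_congr hrpow, integral_rpow (Or.inl (by norm_num)),
    sqrt_eq_rpow, sqrt_eq_rpow, smul_eq_mul]
  norm_num
  ring

theorem sub_two_mul_min_eq_abs (s t : ℝ) : t + s - 2 * min s t = |t - s| := by
  rcases le_total s t with h | h
  · rw [min_eq_left h, abs_of_nonneg (by linarith)]; ring
  · rw [min_eq_right h, abs_of_nonpos (by linarith)]; ring

theorem integral_Ioc_min_integral_heatKernel_mul {p : ℝ → ℝ → ℝ}
    (hp : ∀ t, 0 < t → ∀ x, p t x = heatKernel t x) {s t : ℝ} (hs : 0 ≤ s) (ht : 0 ≤ t) :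
    ∫ r in Set.Ioc 0 (min s t), ∫ y, p (t - r) y * p (s - r) y
      = (√(2 * π))⁻¹ * (√(t + s) - √|t - s|) := by
  have hinner : ∀ r ∈ Set.Ioo 0 (min s t),
      ∫ y, p (t - r) y * p (s - r) y = (√(2 * π))⁻¹ * (√(t + s - 2 * r))⁻¹ := by
    rintro r ⟨-, hr⟩
    have htr : 0 < t - r := by linarith [min_le_right s t]
    have hsr : 0 < s - r := by linarith [min_le_left s t]
    simp only [hp _ htr, hp _ hsr]
    rw [integral_heatKernel_mul_heatKernel htr hsr, sqrt_mul (by positivity), mul_inv]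
    ring_nf
  rw [integral_Ioc_eq_integral_Ioo, setIntegral_congr_fun measurableSet_Ioo hinner,
    ← integral_Ioc_eq_integral_Ioo, ← intervalIntegral.integral_of_le (le_min hs ht),
    intervalIntegral.integral_const_mul,
    integral_inv_sqrt_sub_two_mul (le_min hs ht) (by linarith [min_le_left s t, min_le_right s t]),
    sub_two_mul_min_eq_abs]

theorem bifractionalCovariance_half_half (s t : ℝ) :
    bifractionalCovariance (1 / 2) (1 / 2) s t = (√2)⁻¹ * (√(s + t) - √|t - s|) := by
  rw [bifractionalCovariance, rpow_neg zero_le_two, ← sqrt_eq_rpow]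
  norm_num [← sqrt_eq_rpow]

theorem stmt_17_general {Ω : Type*} [MeasurableSpace Ω] (μ : Measure Ω)
    (F : ℝ → Ω → ℝ) (p : ℝ → ℝ → ℝ)
    (hp : ∀ t : ℝ, 0 < t → ∀ x : ℝ,
      p t x = (Real.sqrt (2 * Real.pi * t))⁻¹ * Real.exp (-x^2 / (2*t)))
    (hcovF : ∀ s t : ℝ, s ∈ Set.Icc (0:ℝ) 1 → t ∈ Set.Icc (0:ℝ) 1 →
      ∫ ω, F s ω * F t ω ∂μ
        = ∫ r in Set.Ioc (0:ℝ) (min s t), ∫ y : ℝ, p (t - r) y * p (s - r) y) :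
    (∀ s t : ℝ, s ∈ Set.Icc (0:ℝ) 1 → t ∈ Set.Icc (0:ℝ) 1 →
      ∫ ω, F s ω * F t ω ∂μ
        = (Real.sqrt (2 * Real.pi))⁻¹ * (Real.sqrt (t + s) - Real.sqrt |t - s|)) ∧
    (∃ c : ℝ, 0 < c ∧ ∀ s t : ℝ, s ∈ Set.Icc (0:ℝ) 1 → t ∈ Set.Icc (0:ℝ) 1 →
      ∫ ω, F s ω * F t ω ∂μ
        = c * ((2:ℝ) ^ (-(1:ℝ)/2) *
            ((s ^ (2 * (1/2:ℝ)) + t ^ (2 * (1/2:ℝ))) ^ ((1:ℝ)/2)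
              - |t - s| ^ (2 * (1/2:ℝ) * (1/2:ℝ))))) := by
  have hcov : ∀ s t : ℝ, s ∈ Set.Icc (0:ℝ) 1 → t ∈ Set.Icc (0:ℝ) 1 →
      ∫ ω, F s ω * F t ω ∂μ = (√(2 * π))⁻¹ * (√(t + s) - √|t - s|) := fun s t hs ht => by
    rw [hcovF s t hs ht, integral_Ioc_min_integral_heatKernel_mul hp hs.1 ht.1]
  refine ⟨hcov, (√π)⁻¹, by positivity, fun s t hs ht => ?_⟩
  rw [neg_div, ← bifractionalCovariance, bifractionalCovariance_half_half, hcov s t hs ht,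
    sqrt_mul zero_le_two, mul_inv, add_comm s t]
  ring

/-- For the centered Gaussian process `F_t = u(t,0)`, where `u` solves the stochastic heat
equation with zero initial condition (so that `E(F_s F_t) = ∫_0^{s∧t} ∫_ℝ p_{t-r}(y) p_{s-r}(y)
dy dr` with `p` the heat kernel), the covariance equals `(1/√(2π))(√(t+s) - √|t-s|)`;
in particular `F` is, up to a multiplicative constant, a bifractional Brownian motion with
indices `H = K = 1/2`, whose covariance is `2^{-K}((t^{2H} + s^{2H})^K - |t-s|^{2HK})`. -/
theorem stmt_17 {Ω : Type*} [MeasurableSpace Ω] (μ : Measure Ω) [IsProbabilityMeasure μ]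
    (F : ℝ → Ω → ℝ) (p : ℝ → ℝ → ℝ)
    (hp : ∀ t : ℝ, 0 < t → ∀ x : ℝ,
      p t x = (Real.sqrt (2 * Real.pi * t))⁻¹ * Real.exp (-x^2 / (2*t)))
    (hcovF : ∀ s t : ℝ, s ∈ Set.Icc (0:ℝ) 1 → t ∈ Set.Icc (0:ℝ) 1 →
      ∫ ω, F s ω * F t ω ∂μ
        = ∫ r in Set.Ioc (0:ℝ) (min s t), ∫ y : ℝ, p (t - r) y * p (s - r) y) :
    (∀ s t : ℝ, s ∈ Set.Icc (0:ℝ) 1 → t ∈ Set.Icc (0:ℝ) 1 →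
      ∫ ω, F s ω * F t ω ∂μ
        = (Real.sqrt (2 * Real.pi))⁻¹ * (Real.sqrt (t + s) - Real.sqrt |t - s|)) ∧
    (∃ c : ℝ, 0 < c ∧ ∀ s t : ℝ, s ∈ Set.Icc (0:ℝ) 1 → t ∈ Set.Icc (0:ℝ) 1 →
      ∫ ω, F s ω * F t ω ∂μ
        = c * ((2:ℝ) ^ (-(1:ℝ)/2) *
            ((s ^ (2 * (1/2:ℝ)) + t ^ (2 * (1/2:ℝ))) ^ ((1:ℝ)/2)
              - |t - s| ^ (2 * (1/2:ℝ) * (1/2:ℝ))))) :=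
  stmt_17_general μ F p hp hcovF
end

section
/- For a fractional Brownian motion B^H on [0,1] with Hurst index H ∈ (0,1), the covariance R_H(s,t) = (1/2)(t^{2H} + s^{2H} - |t-s|^{2H}) is a positive semidefinite kernel; equivalently, for all finite families of times t_1,...,t_m ∈ [0,1] and reals a_1,...,a_m, Σ_{i,j} a_i a_j R_H(t_i,t_j) ≥ 0. -/
/-!
For `0 < α < 2` and real `x`, the substitution `v ↦ |x| v` gives
`∫₀^∞ (1 - cos (x v)) v^{-(1+α)} dv = c_α |x| ^ α` with `c_α > 0`. Hence the quadratic form of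
`|t_j|^α + |t_i|^α - |t_i - t_j|^α` is `c_α⁻¹` times the integral against `v^{-(1+α)} dv` of
`∑ aᵢ aⱼ (1 - cos (tᵢ v) - cos (tⱼ v) + cos ((tᵢ - tⱼ) v)) = |∑ aᵢ (1 - e^{i tᵢ v})|²`,
which is nonnegative. With `α = 2H` and `t ≥ 0` this is the fBm covariance.
-/

open MeasureTheory Real Set

noncomputable def absRpowIntegrand (α x v : ℝ) : ℝ := (1 - cos (x * v)) * v ^ (-(1 + α))

noncomputable def absRpowConst (α : ℝ) : ℝ := ∫ v in Ioi 0, absRpowIntegrand α 1 v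

section AbsRpowIntegrand

variable {α : ℝ}

lemma absRpowIntegrand_nonneg (x : ℝ) {v : ℝ} (hv : 0 < v) : 0 ≤ absRpowIntegrand α x v :=
  mul_nonneg (by linarith [cos_le_one (x * v)]) (rpow_pos_of_pos hv _).le

lemma continuousOn_absRpowIntegrand (x : ℝ) : ContinuousOn (absRpowIntegrand α x) (Ioi 0) :=
  (continuous_const.sub (continuous_cos.comp (continuous_const_mul x))).continuousOn.mul
    fun v hv => (continuousAt_rpow_const v _ (Or.inl (ne_of_gt hv))).continuousWithinAt

lemma absRpowIntegrand_le_of_pos (x : ℝ) {v : ℝ} (hv : 0 < v) :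
    absRpowIntegrand α x v ≤ x ^ 2 / 2 * v ^ (1 - α) := by
  have hpow : v ^ (1 - α) = v ^ 2 * v ^ (-(1 + α)) := by
    rw [← rpow_natCast v 2, ← rpow_add hv]; push_cast; ring_nf
  calc absRpowIntegrand α x v ≤ (x * v) ^ 2 / 2 * v ^ (-(1 + α)) :=
        mul_le_mul_of_nonneg_right (by linarith [one_sub_sq_div_two_le_cos (x := x * v)])
          (rpow_pos_of_pos hv _).le
    _ = x ^ 2 / 2 * v ^ (1 - α) := by rw [hpow]; ring

lemma absRpowIntegrand_le_two_mul (x : ℝ) {v : ℝ} (hv : 0 < v) :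
    absRpowIntegrand α x v ≤ 2 * v ^ (-(1 + α)) :=
  mul_le_mul_of_nonneg_right (by linarith [neg_one_le_cos (x * v)]) (rpow_pos_of_pos hv _).le

lemma integrableOn_absRpowIntegrand_of_le {s : Set ℝ} (hs : MeasurableSet s)
    (hs0 : s ⊆ Ioi 0) {g : ℝ → ℝ} (hg : IntegrableOn g s) (x : ℝ)
    (hle : ∀ v ∈ s, absRpowIntegrand α x v ≤ g v) : IntegrableOn (absRpowIntegrand α x) s := by
  refine Integrable.mono hg (((continuousOn_absRpowIntegrand x).mono hs0).aestronglyMeasurable hs) ?_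
  filter_upwards [ae_restrict_mem hs] with v hv
  rw [norm_of_nonneg (absRpowIntegrand_nonneg x (hs0 hv))]
  exact (hle v hv).trans (le_abs_self _)

lemma integrableOn_absRpowIntegrand (hα : 0 < α) (hα2 : α < 2) (x : ℝ) :
    IntegrableOn (absRpowIntegrand α x) (Ioi 0) := by
  have near_zero : IntegrableOn (absRpowIntegrand α x) (Ioc 0 1) := by
    refine integrableOn_absRpowIntegrand_of_le measurableSet_Ioc Ioc_subset_Ioi_self ?_ x
      fun v hv => absRpowIntegrand_le_of_pos x hv.1
    exact (Iff.mpr integrableOn_Ioc_iff_integrableOn_Ioo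
      ((intervalIntegral.integrableOn_Ioo_rpow_iff one_pos).mpr (by linarith))).const_mul _
  have near_top : IntegrableOn (absRpowIntegrand α x) (Ioi 1) :=
    integrableOn_absRpowIntegrand_of_le measurableSet_Ioi (Ioi_subset_Ioi zero_le_one)
      ((integrableOn_Ioi_rpow_of_lt (by linarith) one_pos).const_mul 2) x
      fun v hv => absRpowIntegrand_le_two_mul x (one_pos.trans hv)
  simpa only [Ioc_union_Ioi_eq_Ioi zero_le_one] using near_zero.union near_top

lemma absRpowConst_pos (hα : 0 < α) (hα2 : α < 2) : 0 < absRpowConst α := by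
  rw [absRpowConst, setIntegral_pos_iff_support_of_nonneg_ae
    (ae_restrict_of_forall_mem measurableSet_Ioi fun v hv => absRpowIntegrand_nonneg 1 hv)
    (integrableOn_absRpowIntegrand hα hα2 1)]
  have hsub : Ioo (0 : ℝ) 1 ⊆ Function.support (absRpowIntegrand α 1) ∩ Ioi 0 := by
    refine fun v hv => ⟨ne_of_gt ?_, hv.1⟩
    have hcos : cos v < 1 := by
      simpa using cos_lt_cos_of_nonneg_of_le_pi le_rfl
        (hv.2.le.trans (by linarith [pi_gt_three])) hv.1
    rw [absRpowIntegrand, one_mul]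
    exact mul_pos (by linarith) (rpow_pos_of_pos hv.1 _)
  calc (0 : ENNReal) < volume (Ioo (0 : ℝ) 1) := by simp
    _ ≤ _ := measure_mono hsub

lemma absRpowIntegrand_eq_rpow_mul_comp_mul {x : ℝ} (hx : x ≠ 0) {v : ℝ} (hv : 0 < v) :
    absRpowIntegrand α x v = |x| ^ (1 + α) * absRpowIntegrand α 1 (|x| * v) := by
  have hb : 0 < |x| := abs_pos.mpr hx
  have hcos : cos (|x| * v) = cos (x * v) := by
    rw [← abs_of_pos hv, ← abs_mul, cos_abs, abs_of_pos hv]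
  have hbb : |x| ^ (1 + α) * |x| ^ (-(1 + α)) = 1 := by
    rw [← rpow_add hb, add_neg_cancel, rpow_zero]
  rw [absRpowIntegrand, absRpowIntegrand, one_mul, hcos, mul_rpow hb.le hv.le]
  linear_combination (1 - cos (x * v)) * v ^ (-(1 + α)) * hbb.symm

lemma integral_absRpowIntegrand (hα : 0 < α) (x : ℝ) :
    ∫ v in Ioi 0, absRpowIntegrand α x v = |x| ^ α * absRpowConst α := by
  rcases eq_or_ne x 0 with rfl | hx
  · simp [absRpowIntegrand, zero_rpow hα.ne']
  have hb : 0 < |x| := abs_pos.mpr hx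
  rw [setIntegral_congr_fun measurableSet_Ioi
      fun v hv => absRpowIntegrand_eq_rpow_mul_comp_mul hx hv,
    integral_const_mul, integral_comp_mul_left_Ioi _ 0 hb, mul_zero, smul_eq_mul, ← absRpowConst,
    ← mul_assoc, ← rpow_neg_one, ← rpow_add hb]
  ring_nf

end AbsRpowIntegrand

lemma sum_sum_mul_one_sub_cos_sub_cos_add_cos_sub {ι : Type*} [Fintype ι] (a x : ι → ℝ) :
    ∑ i, ∑ j, a i * a j * (1 - cos (x j) - cos (x i) + cos (x i - x j)) =
      (∑ i, a i * (1 - cos (x i))) ^ 2 + (∑ i, a i * sin (x i)) ^ 2 := by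
  simp only [sq, Finset.sum_mul_sum, ← Finset.sum_add_distrib, cos_sub]
  exact Finset.sum_congr rfl fun i _ => Finset.sum_congr rfl fun j _ => by ring

lemma sum_sum_mul_absRpowIntegrand_nonneg {ι : Type*} [Fintype ι] {α : ℝ} (t a : ι → ℝ)
    {v : ℝ} (hv : 0 < v) :
    0 ≤ ∑ i, ∑ j, a i * a j * (absRpowIntegrand α (t j) v + absRpowIntegrand α (t i) v -
      absRpowIntegrand α (t i - t j) v) := by
  have hsum : ∑ i, ∑ j, a i * a j * (absRpowIntegrand α (t j) v + absRpowIntegrand α (t i) v -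
      absRpowIntegrand α (t i - t j) v) = ((∑ i, a i * (1 - cos (t i * v))) ^ 2 +
        (∑ i, a i * sin (t i * v)) ^ 2) * v ^ (-(1 + α)) := by
    rw [← sum_sum_mul_one_sub_cos_sub_cos_add_cos_sub, Finset.sum_mul]
    refine Finset.sum_congr rfl fun i _ => ?_
    rw [Finset.sum_mul]
    refine Finset.sum_congr rfl fun j _ => ?_
    simp only [absRpowIntegrand, sub_mul]
    ring
  rw [hsum]
  exact mul_nonneg (by positivity) (rpow_pos_of_pos hv _).le

theorem sum_sum_mul_abs_rpow_add_abs_rpow_sub_abs_rpow_sub_nonneg {ι : Type*} [Fintype ι]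
    {α : ℝ} (hα : 0 < α) (hα2 : α < 2) (t a : ι → ℝ) :
    0 ≤ ∑ i, ∑ j, a i * a j * (|t j| ^ α + |t i| ^ α - |t i - t j| ^ α) := by
  let F : ι → ι → ℝ → ℝ := fun i j v => a i * a j *
    (absRpowIntegrand α (t j) v + absRpowIntegrand α (t i) v - absRpowIntegrand α (t i - t j) v)
  have hint : ∀ x, IntegrableOn (absRpowIntegrand α x) (Ioi 0) :=
    integrableOn_absRpowIntegrand hα hα2
  have hF_int : ∀ i j, IntegrableOn (F i j) (Ioi 0) := fun i j =>
    (((hint _).add (hint _)).sub (hint _)).const_mul _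
  have hF_integral : ∀ i j, ∫ v in Ioi 0, F i j v =
      absRpowConst α * (a i * a j * (|t j| ^ α + |t i| ^ α - |t i - t j| ^ α)) := by
    intro i j
    rw [integral_const_mul,
      integral_sub (f := fun v => absRpowIntegrand α (t j) v + absRpowIntegrand α (t i) v)
        ((hint _).add (hint _)) (hint _),
      integral_add (hint _) (hint _)]
    simp only [integral_absRpowIntegrand hα]
    ring
  have key : absRpowConst α * ∑ i, ∑ j, a i * a j * (|t j| ^ α + |t i| ^ α - |t i - t j| ^ α) =
      ∫ v in Ioi 0, ∑ i, ∑ j, F i j v := by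
    simp only [Finset.mul_sum, ← hF_integral]
    rw [integral_finsetSum _ fun i _ => integrable_finsetSum _ fun j _ => hF_int i j]
    exact Finset.sum_congr rfl fun i _ => (integral_finsetSum _ fun j _ => hF_int i j).symm
  refine (mul_nonneg_iff_of_pos_left (absRpowConst_pos hα hα2)).mp ?_
  rw [key]
  exact setIntegral_nonneg measurableSet_Ioi fun v hv =>
    sum_sum_mul_absRpowIntegrand_nonneg t a hv

/-- The fBm covariance `R_H(s,t) = (1/2)(t^{2H} + s^{2H} - |t-s|^{2H})` is a positive
semidefinite kernel on `[0,1]`, for every Hurst index `H ∈ (0,1)`. -/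
theorem stmt_18 :
    ∀ H : ℝ, H ∈ Set.Ioo (0:ℝ) 1 →
    ∀ (m : ℕ) (t : Fin m → ℝ), (∀ i, t i ∈ Set.Icc (0:ℝ) 1) →
    ∀ a : Fin m → ℝ,
      0 ≤ ∑ i, ∑ j, a i * a j *
        ((1/2) * ((t j) ^ (2*H) + (t i) ^ (2*H) - |t i - t j| ^ (2*H))) := by
  intro H hH m t ht a
  have habs : ∀ i, t i ^ (2 * H) = |t i| ^ (2 * H) := fun i => by rw [abs_of_nonneg (ht i).1]
  have hsum := sum_sum_mul_abs_rpow_add_abs_rpow_sub_abs_rpow_sub_nonneg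
    (by linarith [hH.1] : 0 < 2 * H) (by linarith [hH.2] : 2 * H < 2) t a
  simp only [habs, mul_left_comm _ (1 / 2 : ℝ), ← Finset.mul_sum]
  exact mul_nonneg one_half_pos.le hsum
end
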